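/- Let ρ and σ be positive semidefinite matrices of the same size and let {W_d}_{d∈D} be a finite family of matrices with ∑_{d∈D} W_d = id. Then ∑_{d∈D} F(W_d† · ρ · W_d, σ) ≥ F(ρ, σ). -/

import Mathlib

open scoped BigOperators ComplexOrder
open Matrix Filter MeasureTheory

noncomputable section

namespace QMarkov

variable {ι : Type*}

/-- Positive semidefinite square root of a matrix (junk value `0` if not PSD). -/
noncomputable def matSqrt [Fintype ι] (A : Matrix ι ι ℂ) : Matrix ι ι ℂ := by
  classical exact if h : A.PosSemidef then
    (h.1.eigenvectorUnitary : Matrix ι ι ℂ) *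
      Matrix.diagonal (fun i => ((Real.sqrt (h.1.eigenvalues i) : ℝ) : ℂ)) *
      (star (h.1.eigenvectorUnitary : Matrix ι ι ℂ))
    else 0

/-- Trace norm (sum of singular values). -/
noncomputable def traceNorm [Fintype ι] (A : Matrix ι ι ℂ) : ℝ :=
  (matSqrt (Aᴴ * A)).trace.re

/-- Fidelity `F(ρ,σ) = ‖√ρ √σ‖₁`. -/
noncomputable def fid [Fintype ι] (ρ σ : Matrix ι ι ℂ) : ℝ :=
  traceNorm (matSqrt ρ * matSqrt σ)

/-- Generalized trace distance `Δ(ρ,σ) = ½‖ρ-σ‖₁ + ½|tr(ρ-σ)|`. -/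
noncomputable def tdist [Fintype ι] (ρ σ : Matrix ι ι ℂ) : ℝ :=
  (1 / 2) * traceNorm (ρ - σ) + (1 / 2) * ‖(ρ - σ).trace‖

/-- Von Neumann entropy `H(ρ) = -∑ᵢ λᵢ log₂ λᵢ` (junk `0` if not Hermitian);
the convention `0 · log₂ 0 = 0` is automatic since `Real.logb 2 0 = 0`. -/
noncomputable def vnEntropy [Fintype ι] (A : Matrix ι ι ℂ) : ℝ := by
  classical exact
    if h : A.IsHermitian then -∑ i, h.eigenvalues i * Real.logb 2 (h.eigenvalues i) else 0

/-- Matrix base-2 logarithm on the support of a Hermitian matrix (junk `0` if not Hermitian). -/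
noncomputable def mlog [Fintype ι] (A : Matrix ι ι ℂ) : Matrix ι ι ℂ := by
  classical exact
    if h : A.IsHermitian then
      (h.eigenvectorUnitary : Matrix ι ι ℂ) *
        Matrix.diagonal (fun i => (Real.logb 2 (h.eigenvalues i) : ℂ)) *
        (h.eigenvectorUnitary : Matrix ι ι ℂ)ᴴ
    else 0

/-- Square root of the Moore–Penrose pseudoinverse of a Hermitian PSD matrix
(junk `0` if not Hermitian). -/
noncomputable def pinvSqrt [Fintype ι] (A : Matrix ι ι ℂ) : Matrix ι ι ℂ := by
  classical exact
    if h : A.IsHermitian then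
      (h.eigenvectorUnitary : Matrix ι ι ℂ) *
        Matrix.diagonal (fun i => ((Real.sqrt (h.eigenvalues i))⁻¹ : ℂ)) *
        (h.eigenvectorUnitary : Matrix ι ι ℂ)ᴴ
    else 0

/-- Relative entropy `D(ρ‖σ)`, equal to `tr(ρ(log₂ρ - log₂σ))/tr ρ` when the support of
`ρ` is contained in the support of `σ`, and `+∞` otherwise. -/
noncomputable def relEnt [Fintype ι] (ρ σ : Matrix ι ι ℂ) : EReal := by
  classical exact
    if ∀ v : ι → ℂ, σ *ᵥ v = 0 → ρ *ᵥ v = 0 then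
      (((ρ * (mlog ρ - mlog σ)).trace.re / ρ.trace.re : ℝ) : EReal)
    else ⊤

/-- `n`-fold tensor power of a matrix. -/
def tpow (A : Matrix ι ι ℂ) (n : ℕ) : Matrix (Fin n → ι) (Fin n → ι) ℂ :=
  Matrix.of fun x y => ∏ i, A (x i) (y i)

/-- Permutation invariance of a matrix on an `n`-fold tensor power space. -/
def permInv {n : ℕ} (ρ : Matrix (Fin n → ι) (Fin n → ι) ℂ) : Prop :=
  ∀ π : Equiv.Perm (Fin n), ∀ x y, ρ (x ∘ π) (y ∘ π) = ρ x y

/-- Rank-one projector `|φ⟩⟨φ|`. -/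
def vecOuter (φ : ι → ℂ) : Matrix ι ι ℂ :=
  Matrix.of fun i j => φ i * star (φ j)

variable {A B C D E : Type*}

/-- Partial trace over the second factor. -/
def ptr2 [Fintype E] (M : Matrix (D × E) (D × E) ℂ) : Matrix D D ℂ :=
  Matrix.of fun d d' => ∑ e, M (d, e) (d', e)

/-- Partial trace over the `n` copies of `E` of a matrix on `(D ⊗ E)^⊗n`. -/
def ptrPow [Fintype E] {n : ℕ} (M : Matrix (Fin n → D × E) (Fin n → D × E) ℂ) :
    Matrix (Fin n → D) (Fin n → D) ℂ :=
  Matrix.of fun x y => ∑ e : Fin n → E, M (fun i => (x i, e i)) (fun i => (y i, e i))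

/-- Marginal `ρ_AB` of a tripartite matrix. -/
def margAB [Fintype C] (ρ : Matrix (A × B × C) (A × B × C) ℂ) : Matrix (A × B) (A × B) ℂ :=
  Matrix.of fun x y => ∑ c, ρ (x.1, x.2, c) (y.1, y.2, c)

/-- Marginal `ρ_BC` of a tripartite matrix. -/
def margBC [Fintype A] (ρ : Matrix (A × B × C) (A × B × C) ℂ) : Matrix (B × C) (B × C) ℂ :=
  Matrix.of fun x y => ∑ a, ρ (a, x.1, x.2) (a, y.1, y.2)

/-- Marginal `ρ_B` of a tripartite matrix. -/
def margB [Fintype A] [Fintype C] (ρ : Matrix (A × B × C) (A × B × C) ℂ) : Matrix B B ℂ :=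
  Matrix.of fun b b' => ∑ a, ∑ c, ρ (a, b, c) (a, b', c)

/-- Conditional mutual information `I(A:C|B)_ρ = H(ρ_AB) + H(ρ_BC) - H(ρ_B) - H(ρ_ABC)`. -/
noncomputable def cmi [Fintype A] [Fintype B] [Fintype C]
    (ρ : Matrix (A × B × C) (A × B × C) ℂ) : ℝ :=
  vnEntropy (margAB ρ) + vnEntropy (margBC ρ) - vnEntropy (margB ρ) - vnEntropy ρ

/-- Application of `I_A ⊗ T` to a matrix on `A ⊗ B`, for `T` a map from matrices over `B`
to matrices over `B ⊗ C`. -/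
def extT (T : Matrix B B ℂ → Matrix (B × C) (B × C) ℂ)
    (ρ : Matrix (A × B) (A × B) ℂ) : Matrix (A × B × C) (A × B × C) ℂ :=
  Matrix.of fun x y => T (Matrix.of fun b b' => ρ (x.1, b) (y.1, b')) x.2 y.2

/-- `M ⊗ id` on `B ⊗ C`. -/
def kronId (M : Matrix B B ℂ) : Matrix (B × C) (B × C) ℂ := by
  classical exact Matrix.of fun x y => if x.2 = y.2 then M x.1 y.1 else 0

end QMarkov

namespace QMarkov
variable {A B C : Type*}

/-- Marginal on the first and third factors of a tripartite matrix. -/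
def marg13 [Fintype B] (ρ : Matrix (A × B × C) (A × B × C) ℂ) : Matrix (A × C) (A × C) ℂ :=
  Matrix.of fun x y => ∑ b, ρ (x.1, b, x.2) (y.1, b, y.2)

/-- Marginal on the third factor of a tripartite matrix. -/
def marg3 [Fintype A] [Fintype B] (ρ : Matrix (A × B × C) (A × B × C) ℂ) : Matrix C C ℂ :=
  Matrix.of fun c c' => ∑ a, ∑ b, ρ (a, b, c) (a, b, c')

/-- Conditional mutual information `I(first : second | third)` of a tripartite matrix, i.e.
for `ρ` on `A ⊗ C ⊗ E` this is `I(A:C|E)_ρ = H(ρ_AE) + H(ρ_CE) - H(ρ_E) - H(ρ_ACE)`. -/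
noncomputable def cmi13 [Fintype A] [Fintype B] [Fintype C]
    (ρ : Matrix (A × B × C) (A × B × C) ℂ) : ℝ :=
  vnEntropy (marg13 ρ) + vnEntropy (margBC ρ) - vnEntropy (marg3 ρ) - vnEntropy ρ

end QMarkov
namespace QMarkov

/-!
Since `∑ W_d = 1`, `√ρ √σ = ∑_d √ρ W_d √σ`, so the triangle inequality for the trace norm gives
`F(ρ, σ) ≤ ∑_d ‖√ρ W_d √σ‖₁`. The trace norm of `X` only depends on `Xᴴ X`, and both
`√ρ W_d √σ` and `√(W_dᴴ ρ W_d) √σ` have `Xᴴ X = √σ W_dᴴ ρ W_d √σ`, so each summand is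
`F(W_dᴴ ρ W_d, σ)`.

The triangle inequality comes from the variational formula `‖A‖₁ = max {Re tr (M A) : M Mᴴ ≤ 1}`:
the bound is Cauchy–Schwarz in an eigenbasis of `Aᴴ A`, and the maximum is attained at
`M = (Aᴴ A)^(-1/2) Aᴴ`, with the inverse taken on the support.
-/

open scoped MatrixOrder

section

variable {ι : Type*} [Fintype ι]

lemma matSqrt_eq_cfc [DecidableEq ι] {A : Matrix ι ι ℂ} (hA : A.PosSemidef) :
    matSqrt A = cfc Real.sqrt A := by
  rw [hA.1.cfc_eq, IsHermitian.cfc, Unitary.conjStarAlgAut_apply, matSqrt, dif_pos hA]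
  -- `matSqrt` builds its diagonal with the classical `DecidableEq` instance
  congr 2
  congr 1
  exact Subsingleton.elim _ _

lemma matSqrt_eq_sqrt [DecidableEq ι] {A : Matrix ι ι ℂ} (hA : A.PosSemidef) :
    matSqrt A = CFC.sqrt A := by
  rw [matSqrt_eq_cfc hA, CFC.sqrt_eq_real_sqrt A hA.nonneg, cfcₙ_eq_cfc]

lemma posSemidef_matSqrt (A : Matrix ι ι ℂ) : (matSqrt A).PosSemidef := by
  classical
  by_cases hA : A.PosSemidef
  · rw [matSqrt_eq_sqrt hA]
    exact (CFC.sqrt_nonneg A).posSemidef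
  · rw [matSqrt, dif_neg hA]
    exact .zero

lemma matSqrt_mul_self {A : Matrix ι ι ℂ} (hA : A.PosSemidef) : matSqrt A * matSqrt A = A := by
  classical
  rw [matSqrt_eq_sqrt hA, CFC.sqrt_mul_sqrt_self A hA.nonneg]

lemma trace_matSqrt [DecidableEq ι] {A : Matrix ι ι ℂ} (hA : A.PosSemidef) :
    (matSqrt A).trace = ∑ i, (√(hA.1.eigenvalues i) : ℂ) := by
  rw [matSqrt_eq_cfc hA, hA.1.cfc_eq, IsHermitian.cfc, Unitary.conjStarAlgAut_apply,
    trace_mul_cycle, Unitary.coe_star_mul_self, one_mul, trace_diagonal]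
  rfl

lemma trace_eq_sum_star_dotProduct_mulVec [DecidableEq ι] (X : Matrix ι ι ℂ)
    (b : OrthonormalBasis ι ℂ (EuclideanSpace ℂ ι)) :
    X.trace = ∑ i, star ⇑(b i) ⬝ᵥ X *ᵥ ⇑(b i) := by
  rw [← X.trace_toLin_eq (PiLp.basisFun 2 ℂ ι), ← toLpLin_eq_toLin,
    LinearMap.trace_eq_sum_inner _ b]
  simp [EuclideanSpace.inner_eq_star_dotProduct, toLpLin_apply, dotProduct_comm]

lemma re_star_dotProduct_le (u v : ι → ℂ) :
    (star u ⬝ᵥ v).re ≤ √(star u ⬝ᵥ u).re * √(star v ⬝ᵥ v).re := by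
  have h := re_inner_le_norm (𝕜 := ℂ) (WithLp.toLp 2 u) (WithLp.toLp 2 v)
  rwa [norm_eq_sqrt_re_inner (𝕜 := ℂ), norm_eq_sqrt_re_inner (𝕜 := ℂ),
    EuclideanSpace.inner_toLp_toLp, EuclideanSpace.inner_toLp_toLp,
    EuclideanSpace.inner_toLp_toLp, dotProduct_comm v, dotProduct_comm u, dotProduct_comm v] at h

lemma re_star_dotProduct_conjTranspose_mulVec_le [DecidableEq ι] {M : Matrix ι ι ℂ}
    (hM : M * Mᴴ ≤ 1) (v : ι → ℂ) : (star (Mᴴ *ᵥ v) ⬝ᵥ Mᴴ *ᵥ v).re ≤ (star v ⬝ᵥ v).re := by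
  have h := (Complex.le_def.mp (hM.dotProduct_mulVec_nonneg v)).1
  rw [star_mulVec, conjTranspose_conjTranspose, ← dotProduct_mulVec, mulVec_mulVec]
  simpa [sub_mulVec, dotProduct_sub] using h

lemma traceNorm_eq_sum_sqrt_eigenvalues [DecidableEq ι] (A : Matrix ι ι ℂ) :
    traceNorm A = ∑ i, √((posSemidef_conjTranspose_mul_self A).1.eigenvalues i) := by
  rw [traceNorm, trace_matSqrt (posSemidef_conjTranspose_mul_self A)]
  simp

theorem re_trace_mul_le_traceNorm [DecidableEq ι] {M : Matrix ι ι ℂ} (hM : M * Mᴴ ≤ 1)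
    (A : Matrix ι ι ℂ) : (M * A).trace.re ≤ traceNorm A := by
  set hP := (posSemidef_conjTranspose_mul_self A).1
  set b := hP.eigenvectorBasis
  rw [traceNorm_eq_sum_sqrt_eigenvalues, trace_eq_sum_star_dotProduct_mulVec _ b, Complex.re_sum]
  gcongr with i
  have hb : (star ⇑(b i) ⬝ᵥ ⇑(b i)).re = 1 := by
    rw [dotProduct_comm, ← EuclideanSpace.inner_eq_star_dotProduct, inner_self_eq_norm_sq_to_K,
      b.orthonormal.1 i]
    simp
  have hMb : √(star (Mᴴ *ᵥ b i) ⬝ᵥ Mᴴ *ᵥ b i).re ≤ 1 := by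
    rw [Real.sqrt_le_one, ← hb]
    exact re_star_dotProduct_conjTranspose_mulVec_le hM _
  have hAb : (star (A *ᵥ b i) ⬝ᵥ A *ᵥ b i).re = hP.eigenvalues i := by
    rw [hP.eigenvalues_eq, star_mulVec, ← dotProduct_mulVec, mulVec_mulVec]
    rfl
  calc (star ⇑(b i) ⬝ᵥ (M * A) *ᵥ ⇑(b i)).re
      = (star (Mᴴ *ᵥ b i) ⬝ᵥ A *ᵥ b i).re := by
        rw [star_mulVec, conjTranspose_conjTranspose, ← dotProduct_mulVec, mulVec_mulVec]
    _ ≤ √(star (Mᴴ *ᵥ b i) ⬝ᵥ Mᴴ *ᵥ b i).re * √(star (A *ᵥ b i) ⬝ᵥ A *ᵥ b i).re :=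
        re_star_dotProduct_le _ _
    _ ≤ √(hP.eigenvalues i) := by
        rw [hAb]
        exact mul_le_of_le_one_left (Real.sqrt_nonneg _) hMb

theorem exists_re_trace_mul_eq_traceNorm [DecidableEq ι] (A : Matrix ι ι ℂ) :
    ∃ M : Matrix ι ι ℂ, M * Mᴴ ≤ 1 ∧ (M * A).trace.re = traceNorm A := by
  set P := Aᴴ * A
  have hP : P.PosSemidef := posSemidef_conjTranspose_mul_self A
  have hcont (f : ℝ → ℝ) : ContinuousOn f (spectrum ℝ P) := P.finite_real_spectrum.continuousOn f
  set Q := cfc (fun x : ℝ => (√x)⁻¹) P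
  have hQ : Qᴴ = Q := IsSelfAdjoint.star_eq (cfc_predicate _ P)
  have hQP : Q * P = cfc Real.sqrt P := calc
    Q * P = cfc (fun x : ℝ => (√x)⁻¹) P * cfc (fun x : ℝ => x) P := by rw [cfc_id' ℝ P]
    _ = cfc (fun x : ℝ => (√x)⁻¹ * x) P := (cfc_mul _ _ P (hcont _) (hcont _)).symm
    _ = cfc Real.sqrt P := by simp only [inv_mul_eq_div, Real.div_sqrt]
  refine ⟨Q * Aᴴ, ?_, ?_⟩
  · have hMM : Q * Aᴴ * (Q * Aᴴ)ᴴ = cfc (fun x : ℝ => √x * (√x)⁻¹) P := calc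
      Q * Aᴴ * (Q * Aᴴ)ᴴ = Q * P * Q := by
        rw [conjTranspose_mul, conjTranspose_conjTranspose, hQ]
        simp only [P, Matrix.mul_assoc]
      _ = _ := by rw [hQP, cfc_mul _ _ P (hcont _) (hcont _)]
    rw [hMM]
    exact cfc_le_one _ P fun x _ => mul_inv_le_one_of_le₀ le_rfl (Real.sqrt_nonneg x)
  · rw [mul_assoc, hQP, traceNorm, matSqrt_eq_cfc hP]

theorem traceNorm_sum_le {D : Type*} (s : Finset D) (f : D → Matrix ι ι ℂ) :
    traceNorm (∑ d ∈ s, f d) ≤ ∑ d ∈ s, traceNorm (f d) := by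
  classical
  obtain ⟨M, hM, hMA⟩ := exists_re_trace_mul_eq_traceNorm (∑ d ∈ s, f d)
  rw [← hMA, Finset.mul_sum, trace_sum, Complex.re_sum]
  exact Finset.sum_le_sum fun d _ => re_trace_mul_le_traceNorm hM (f d)

lemma fid_conj_eq_traceNorm {ρ : Matrix ι ι ℂ} (hρ : ρ.PosSemidef) (W σ : Matrix ι ι ℂ) :
    fid (Wᴴ * ρ * W) σ = traceNorm (matSqrt ρ * W * matSqrt σ) := by
  set R := matSqrt ρ
  set S := matSqrt σ
  set T := matSqrt (Wᴴ * ρ * W)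
  have hR : Rᴴ = R := (posSemidef_matSqrt ρ).1.eq
  have hS : Sᴴ = S := (posSemidef_matSqrt σ).1.eq
  have hT : Tᴴ = T := (posSemidef_matSqrt _).1.eq
  rw [fid, traceNorm, traceNorm]
  congr 3
  calc (T * S)ᴴ * (T * S) = S * (T * T) * S := by
        simp only [conjTranspose_mul, hS, hT, Matrix.mul_assoc]
    _ = S * Wᴴ * (R * R) * W * S := by
        rw [matSqrt_mul_self (hρ.conjTranspose_mul_mul_same W), matSqrt_mul_self hρ]
        simp only [Matrix.mul_assoc]
    _ = (R * W * S)ᴴ * (R * W * S) := by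
        simp only [conjTranspose_mul, hR, hS, Matrix.mul_assoc]

end

theorem fidelity_decomposition_general
    {ι D : Type*} [Fintype ι] [DecidableEq ι] [Fintype D]
    (ρ σ : Matrix ι ι ℂ) (hρ : ρ.PosSemidef)
    (W : D → Matrix ι ι ℂ) (hW : ∑ d, W d = 1) :
    fid ρ σ ≤ ∑ d, fid ((W d)ᴴ * ρ * W d) σ := by
  have hsplit : matSqrt ρ * matSqrt σ = ∑ d, matSqrt ρ * W d * matSqrt σ := by
    rw [← Finset.sum_mul, ← Finset.mul_sum, hW, Matrix.mul_one]
  calc fid ρ σ = traceNorm (∑ d, matSqrt ρ * W d * matSqrt σ) := by rw [fid, hsplit]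
    _ ≤ ∑ d, traceNorm (matSqrt ρ * W d * matSqrt σ) := traceNorm_sum_le _ _
    _ = ∑ d, fid ((W d)ᴴ * ρ * W d) σ := by simp only [fid_conj_eq_traceNorm hρ]

/-- For a decomposition of the identity `∑ W_d = id`,
`∑_d F(W_dᴴ ρ W_d, σ) ≥ F(ρ, σ)`. -/
theorem fidelity_decomposition
    {ι D : Type*} [Fintype ι] [DecidableEq ι] [Fintype D]
    (ρ σ : Matrix ι ι ℂ) (hρ : ρ.PosSemidef) (hσ : σ.PosSemidef)
    (W : D → Matrix ι ι ℂ) (hW : ∑ d, W d = 1) :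
    fid ρ σ ≤ ∑ d, fid ((W d)ᴴ * ρ * W d) σ :=
  fidelity_decomposition_general ρ σ hρ W hW

end QMarkov
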